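/- Let Γ be a connected finite simplicial graph and A_Γ the associated right-angled Artin group. The following are equivalent: (i) any two vertices whose equivalence classes are maximal are equivalent (there is exactly one maximal equivalence class); (ii) there is a vertex v adjacent to every other vertex of Γ (equivalently Γ = J_[v] for some v ∈ V_ab); (iii) the center of A_Γ is nontrivial. -/

import Mathlib

/-! A vertex `v` adjacent to every other vertex lies above every vertex, so it is in every maximal
class, and its generator is central. Conversely, if all maximal classes agree, a maximal vertex `m`
lies above every `w`; a neighbour `u` of `w ≠ m` then gives `u ∈ lk w ⊆ st m` and
`w ∈ lk u ⊆ st m`, so `m` is adjacent to `w`.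

For the centre, a vertex `v` that misses some `u ≠ v` splits `A_Γ` as the proper amalgam
`A_{st v} *_{A_{lk v}} A_{V ∖ {v}}`, and the centre of a proper amalgam lies in the amalgamated
subgroup (by normal forms). If no vertex is adjacent to all others, a central element therefore
lies in `⋂ v, A_{lk v}`, which the retractions `A_Γ → A_S` identify with
`A_{⋂ v, lk v} = A_∅ = 1`. -/

open SimpleGraph

namespace RaagPaper

variable {V : Type*}

/-- The link of a vertex: the set of vertices adjacent to it. -/
def lk (G : SimpleGraph V) (v : V) : Set V := G.neighborSet v

/-- The (closed) star of a vertex: `st(v) = lk(v) ∪ {v}`. -/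
def st (G : SimpleGraph V) (v : V) : Set V := insert v (G.neighborSet v)

/-- The preorder on vertices: `v ≤ w` iff `lk(v) ⊆ st(w)`. -/
def vle (G : SimpleGraph V) (v w : V) : Prop := lk G v ⊆ st G w

/-- Equivalence of vertices: `v ∼ w` iff `v ≤ w` and `w ≤ v`. -/
def vequiv (G : SimpleGraph V) (v w : V) : Prop := vle G v w ∧ vle G w v

/-- The equivalence class `[v]` of a vertex `v`. -/
def cls (G : SimpleGraph V) (v : V) : Set V := {u | vequiv G u v}

/-- `[v]` is maximal with respect to the partial order induced by `≤`. -/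
def IsMaximalClass (G : SimpleGraph V) (v : V) : Prop := ∀ w, vle G v w → vle G w v

/-- `L_[v] = lk(v) \ [v]`. -/
def Lset (G : SimpleGraph V) (v : V) : Set V := lk G v \ cls G v

/-- `J_[v] = [v] ∪ L_[v]`, the join associated to `[v]`. -/
def Jset (G : SimpleGraph V) (v : V) : Set V := cls G v ∪ Lset G v

/-- `v ∈ V_ab` : any two distinct vertices of `[v]` are adjacent (so `A_[v]` is abelian). -/
def Vab (G : SimpleGraph V) (v : V) : Prop :=
  ∀ x ∈ cls G v, ∀ y ∈ cls G v, x ≠ y → G.Adj x y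

/-- The commutator relations defining the right-angled Artin group of `G`. -/
def raagRels (G : SimpleGraph V) : Set (FreeGroup V) :=
  {r | ∃ u w : V, G.Adj u w ∧
    r = FreeGroup.of u * FreeGroup.of w * (FreeGroup.of u)⁻¹ * (FreeGroup.of w)⁻¹}

/-- The right-angled Artin group `A_Γ`. -/
abbrev Raag (G : SimpleGraph V) : Type _ := PresentedGroup (raagRels G)

/-- The generator of `A_Γ` corresponding to a vertex. -/
def gen (G : SimpleGraph V) (v : V) : Raag G := PresentedGroup.of v

/-- The special subgroup `A_Θ` generated by a set `Θ` of vertices. -/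
def Asub (G : SimpleGraph V) (Θ : Set V) : Subgroup (Raag G) :=
  Subgroup.closure (gen G '' Θ)

/-- The subgroup of inner automorphisms of a group. -/
def Inn (A : Type*) [Group A] : Subgroup (MulAut A) := (MulAut.conj : A →* MulAut A).range

instance (A : Type*) [Group A] : (Inn A).Normal := by
  constructor
  intro n hn φ
  obtain ⟨g, rfl⟩ := hn
  exact ⟨φ g, by ext x; simp [Inn, MulAut.conj]⟩

/-- The outer automorphism group `Out(A) = Aut(A)/Inn(A)`. -/
abbrev OutG (A : Type*) [Group A] : Type _ := MulAut A ⧸ Inn A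

/-- The canonical projection `Aut(A) → Out(A)`. -/
def outMk (A : Type*) [Group A] : MulAut A →* OutG A := QuotientGroup.mk' (Inn A)

end RaagPaper

namespace Monoid.PushoutI

open CoprodI NormalWord

variable {ι : Type*} {G : ι → Type*} {H : Type*} [∀ i, Group (G i)] [Group H]
  {φ : ∀ i, H →* G i}

section NormalForm

variable [DecidableEq ι] [∀ i, DecidableEq (G i)] (d : Transversal φ)

noncomputable def normalFormIndices (x : PushoutI φ) : List ι :=
  (x • (NormalWord.empty : NormalWord d)).toList.map Sigma.fst

variable {d}

theorem normalFormIndices_prod (w : NormalWord d) :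
    normalFormIndices d w.prod = w.toList.map Sigma.fst := by
  rw [normalFormIndices, NormalWord.prod_smul_empty]

theorem normalFormIndices_one : normalFormIndices d (1 : PushoutI φ) = [] := by
  simp [normalFormIndices]

theorem normalFormIndices_base_mul (h : H) (x : PushoutI φ) :
    normalFormIndices d (base φ h * x) = normalFormIndices d x := by
  rw [normalFormIndices, mul_smul, NormalWord.base_smul_def]
  rfl

theorem normalFormIndices_of_mul {i : ι} {g : G i} (hg : g ∉ (φ i).range) {x : PushoutI φ}
    (hx : (normalFormIndices d x).head? ≠ some i) :
    normalFormIndices d (of i g * x) = i :: normalFormIndices d x := by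
  have hfst : (x • (NormalWord.empty : NormalWord d)).fstIdx ≠ some i := by
    rwa [Word.fstIdx, ← List.head?_map]
  rw [normalFormIndices, mul_smul, ← NormalWord.cons_eq_smul g _ hfst hg]
  simp [normalFormIndices]

theorem normalFormIndices_eq_nil_iff {x : PushoutI φ} :
    normalFormIndices d x = [] ↔ x ∈ (base φ).range := by
  constructor
  · intro hx
    refine ⟨(x • (NormalWord.empty : NormalWord d)).head, ?_⟩
    have hw : (x • (NormalWord.empty : NormalWord d)).toWord = Word.empty := by
      ext1
      simpa [normalFormIndices] using hx
    conv_rhs => rw [← mul_one x, ← NormalWord.prod_empty (d := d), ← NormalWord.prod_smul]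
    simp [NormalWord.prod, hw]
  · rintro ⟨h, rfl⟩
    rw [← mul_one (base φ h), normalFormIndices_base_mul, normalFormIndices_one]

theorem normalFormIndices_of {i : ι} {g : G i} (hg : g ∉ (φ i).range) :
    normalFormIndices d (of (φ := φ) i g) = [i] := by
  simpa [normalFormIndices_one] using
    normalFormIndices_of_mul (d := d) hg (x := 1) (by simp [normalFormIndices_one])

theorem normalFormIndices_mul {x y : PushoutI φ}
    (hxy : ∀ i, (normalFormIndices d x).getLast? = some i →
      (normalFormIndices d y).head? ≠ some i) :
    normalFormIndices d (x * y) = normalFormIndices d x ++ normalFormIndices d y := by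
  obtain ⟨w, rfl⟩ : ∃ w : NormalWord d, w.prod = x := ⟨x • NormalWord.empty, by simp⟩
  rw [normalFormIndices_prod] at hxy ⊢
  induction w using consRecOn with
  | empty => rw [NormalWord.prod_empty, one_mul]; rfl
  | cons i g w hw _ hg _ ih =>
    have hcons : (cons g w hw hg).toList.map Sigma.fst = i :: w.toList.map Sigma.fst := by simp
    have hwi : (w.toList.map Sigma.fst).head? ≠ some i := by rwa [List.head?_map]
    rw [hcons] at hxy ⊢
    have ih' := ih fun j hj => hxy j (by simp [List.getLast?_cons, hj])
    have hhead : (normalFormIndices d (w.prod * y)).head? ≠ some i := by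
      rw [ih', List.head?_append]
      cases hL : w.toList.map Sigma.fst with
      | nil => simpa using hxy i (by simp [hL])
      | cons j L => simpa [hL] using hwi
    rw [prod_cons, mul_assoc, normalFormIndices_of_mul hg hhead, ih', List.cons_append]
  | base h w _ ih =>
    rw [NormalWord.prod_smul, mul_assoc, normalFormIndices_base_mul]
    exact ih hxy

theorem length_normalFormIndices_of_mul_le {i : ι} (g : G i) {x : PushoutI φ}
    (hx : (normalFormIndices d x).head? = some i) :
    (normalFormIndices d (of i g * x)).length ≤ (normalFormIndices d x).length := by
  obtain ⟨w, rfl⟩ : ∃ w : NormalWord d, w.prod = x := ⟨x • NormalWord.empty, by simp⟩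
  rw [normalFormIndices_prod] at hx ⊢
  induction w using consRecOn generalizing g with
  | empty => simp at hx
  | cons j l w hw _ hl _ _ =>
    have hcons : (cons l w hw hl).toList.map Sigma.fst = j :: w.toList.map Sigma.fst := by simp
    rw [hcons] at hx ⊢
    obtain rfl : j = i := by simpa using hx
    rw [prod_cons, ← mul_assoc, ← map_mul]
    by_cases hgl : g * l ∈ (φ j).range
    · obtain ⟨c, hc⟩ := hgl
      rw [← hc, of_apply_eq_base, normalFormIndices_base_mul, normalFormIndices_prod]
      simp
    · rw [normalFormIndices_of_mul hgl (by rwa [normalFormIndices_prod, List.head?_map]),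
        normalFormIndices_prod]
  | base h w _ ih =>
    have hmerge : of i g * (base φ h * w.prod) = of i (g * φ i h) * w.prod := by
      rw [map_mul, of_apply_eq_base, mul_assoc]
    rw [NormalWord.prod_smul, hmerge]
    exact ih _ hx

end NormalForm

theorem center_le_range_base [Nontrivial ι] (hφ : ∀ i, Function.Injective (φ i))
    (hproper : ∀ i, (φ i).range ≠ ⊤) :
    Subgroup.center (PushoutI φ) ≤ (base φ).range := by
  classical
  obtain ⟨d⟩ := transversal_nonempty φ hφ
  intro x hx
  rw [← normalFormIndices_eq_nil_iff (d := d)]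
  by_contra hne
  obtain ⟨i, hi⟩ := Option.ne_none_iff_exists'.mp (mt List.head?_eq_none_iff.mp hne)
  obtain ⟨k, hk⟩ := Option.ne_none_iff_exists'.mp (mt List.getLast?_eq_none_iff.mp hne)
  have hcomm (j : ι) (g : G j) : of j g * x = x * of j g := Subgroup.mem_center_iff.mp hx _
  -- If the normal form of `x` begins and ends in the same factor `i`, a letter `b` from another
  -- factor gives `b * x` and `x * b` different first factors; otherwise a letter `a` of the first
  -- factor is absorbed by `a * x` but appended by `x * a`, so the lengths differ.
  by_cases hik : i = k
  · subst hik
    obtain ⟨j, hj⟩ := exists_ne i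
    obtain ⟨b, hb⟩ := SetLike.exists_not_mem_of_ne_top _ (hproper j)
    have hleft := normalFormIndices_of_mul (d := d) hb (x := x) (by simpa [hi] using hj.symm)
    rw [hcomm, normalFormIndices_mul (by simpa [hk, normalFormIndices_of hb] using hj),
      normalFormIndices_of hb] at hleft
    have hij : i = j := by simpa [List.head?_append, hi] using congrArg List.head? hleft
    exact hj hij.symm
  · obtain ⟨a, ha⟩ := SetLike.exists_not_mem_of_ne_top _ (hproper i)
    have hlen := length_normalFormIndices_of_mul_le a hi
    rw [hcomm, normalFormIndices_mul (by simpa [hk, normalFormIndices_of ha] using hik),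
      normalFormIndices_of ha] at hlen
    simp at hlen

end Monoid.PushoutI

namespace RaagPaper

variable {V : Type*} (G : SimpleGraph V)

theorem mem_st_iff {v u : V} : u ∈ st G v ↔ u = v ∨ G.Adj v u := Iff.rfl

theorem lk_subset_st (v : V) : lk G v ⊆ st G v := Set.subset_insert v _

theorem vle_refl (v : V) : vle G v v := lk_subset_st G v

theorem vle_trans {a b c : V} (hab : vle G a b) (hbc : vle G b c) : vle G a c := by
  intro x (hx : G.Adj a x)
  rcases hab hx with rfl | hbx
  · rcases hbc hx.symm with rfl | hca
    · exact Or.inr hx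
    · rcases hab hca.symm with rfl | hxc
      · exact Or.inl rfl
      · exact Or.inr hxc.symm
  · exact hbc hbx

theorem vle_of_forall_adj {v : V} (hv : ∀ w, w ≠ v → G.Adj v w) (u : V) : vle G u v :=
  fun x _ => (eq_or_ne x v).elim Or.inl fun h => Or.inr (hv x h)

theorem exists_vle_isMaximalClass [Finite V] (w : V) : ∃ m, vle G w m ∧ IsMaximalClass G m := by
  let r : V → V → Prop := fun a b => vle G b a ∧ ¬vle G a b
  have : IsTrans V r := ⟨fun a b c ⟨hba, hab⟩ ⟨hcb, _⟩ =>
    ⟨vle_trans G hcb hba, fun hac => hab (vle_trans G hac hcb)⟩⟩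
  have : Std.Irrefl r := ⟨fun a ⟨haa, hnaa⟩ => hnaa haa⟩
  obtain ⟨m, hwm, hmin⟩ :=
    (Finite.wellFounded_of_trans_of_irrefl r).has_min {x | vle G w x} ⟨w, vle_refl G w⟩
  exact ⟨m, hwm, fun z hmz => by_contra fun hzm => hmin z (vle_trans G hwm hmz) ⟨hmz, hzm⟩⟩

theorem vequiv_of_isMaximalClass {v : V} (hv : ∀ w, w ≠ v → G.Adj v w) {a b : V}
    (ha : IsMaximalClass G a) (hb : IsMaximalClass G b) : vequiv G a b :=
  ⟨vle_trans G (vle_of_forall_adj G hv a) (hb v (vle_of_forall_adj G hv b)),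
    vle_trans G (vle_of_forall_adj G hv b) (ha v (vle_of_forall_adj G hv a))⟩

theorem exists_forall_adj_of_vequiv [Finite V] (hconn : G.Connected)
    (h : ∀ v w, IsMaximalClass G v → IsMaximalClass G w → vequiv G v w) :
    ∃ v, ∀ w, w ≠ v → G.Adj v w := by
  obtain ⟨m, -, hm⟩ := exists_vle_isMaximalClass G hconn.nonempty.some
  have hle (w : V) : vle G w m :=
    let ⟨m', hwm', hm'⟩ := exists_vle_isMaximalClass G w
    vle_trans G hwm' (h m' m hm' hm).1
  refine ⟨m, fun w hwm => ?_⟩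
  obtain ⟨u, hwu⟩ : ∃ u, G.Adj w u := by
    obtain ⟨p⟩ := hconn w m
    cases p with
    | nil => exact absurd rfl hwm
    | cons hadj _ => exact ⟨_, hadj⟩
  rcases hle w hwu with rfl | hmu
  · exact hwu.symm
  · rcases hle u hwu.symm with rfl | hmw
    · exact absurd rfl hwm
    · exact hmw

theorem gen_commute {u w : V} (h : G.Adj u w) : Commute (gen G u) (gen G w) := by
  rw [← commutatorElement_eq_one_iff_commute, commutatorElement_def]
  have hrel : PresentedGroup.mk (raagRels G)
      (FreeGroup.of u * FreeGroup.of w * (FreeGroup.of u)⁻¹ * (FreeGroup.of w)⁻¹) = 1 :=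
    (QuotientGroup.eq_one_iff _).2 (Subgroup.subset_normalClosure ⟨u, w, h, rfl⟩)
  simpa [gen, PresentedGroup.of] using hrel

noncomputable def raagLift {K : Type*} [Group K] (f : V → K)
    (hf : ∀ u w, G.Adj u w → Commute (f u) (f w)) : Raag G →* K :=
  PresentedGroup.toGroup (f := f) (by
    rintro r ⟨u, w, huw, rfl⟩
    simp only [map_mul, map_inv, FreeGroup.lift_apply_of]
    rw [← commutatorElement_def, commutatorElement_eq_one_iff_commute]
    exact hf u w huw)

@[simp]
theorem raagLift_gen {K : Type*} [Group K] (f : V → K)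
    (hf : ∀ u w, G.Adj u w → Commute (f u) (f w)) (u : V) :
    raagLift G f hf (gen G u) = f u :=
  PresentedGroup.toGroup.of _

theorem raag_hom_ext {K : Type*} [Group K] {f g : Raag G →* K}
    (h : ∀ u, f (gen G u) = g (gen G u)) : f = g :=
  PresentedGroup.ext h

theorem closure_range_gen : Subgroup.closure (Set.range (gen G)) = ⊤ :=
  PresentedGroup.closure_range_of _

theorem gen_ne_one (v : V) : gen G v ≠ 1 := by
  intro h
  simpa using congrArg (raagLift G (fun _ => Multiplicative.ofAdd (1 : ℤ))
    (fun _ _ _ => Commute.all _ _)) h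

theorem gen_mem_center {v : V} (hv : ∀ w, w ≠ v → G.Adj v w) :
    gen G v ∈ Subgroup.center (Raag G) := by
  have hgen : Subgroup.closure (Set.range (gen G)) ≤ Subgroup.centralizer {gen G v} := by
    rw [Subgroup.closure_le]
    rintro _ ⟨u, rfl⟩ _ rfl
    obtain rfl | hu := eq_or_ne u v
    · rfl
    · exact (gen_commute G (hv u hu)).eq
  rw [closure_range_gen] at hgen
  exact Subgroup.mem_center_iff.2 fun g => (hgen (Subgroup.mem_top g) _ rfl).symm

theorem Asub_mono {S T : Set V} (h : S ⊆ T) : Asub G S ≤ Asub G T :=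
  Subgroup.closure_mono (Set.image_mono h)

theorem Asub_univ : Asub G Set.univ = ⊤ := by
  rw [Asub, Set.image_univ, closure_range_gen]

theorem Asub_empty : Asub G ∅ = ⊥ := by
  simp [Asub]

section Retraction

open scoped Classical

noncomputable def retraction (S : Set V) : Raag G →* Raag G :=
  raagLift G (fun u => if u ∈ S then gen G u else 1) fun u w h => by
    split_ifs
    exacts [gen_commute G h, Commute.one_right _, Commute.one_left _, Commute.one_left _]

@[simp]
theorem retraction_gen (S : Set V) (u : V) :
    retraction G S (gen G u) = if u ∈ S then gen G u else 1 :=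
  raagLift_gen _ _ _ _

theorem retraction_apply_of_mem {S : Set V} {x : Raag G} (hx : x ∈ Asub G S) :
    retraction G S x = x := by
  induction hx using Subgroup.closure_induction with
  | mem _ hy =>
    obtain ⟨u, hu, rfl⟩ := hy
    simp [hu]
  | one => exact map_one _
  | mul _ _ _ _ ha hb => rw [map_mul, ha, hb]
  | inv _ _ ha => rw [map_inv, ha]

theorem retraction_mem (S : Set V) (x : Raag G) : retraction G S x ∈ Asub G S := by
  have hrange : (retraction G S).range ≤ Asub G S := by
    rw [MonoidHom.range_eq_map, ← closure_range_gen, MonoidHom.map_closure, Subgroup.closure_le]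
    rintro _ ⟨_, ⟨u, rfl⟩, rfl⟩
    rw [retraction_gen]
    split_ifs with hu
    exacts [Subgroup.subset_closure ⟨u, hu, rfl⟩, one_mem _]
  exact hrange ⟨x, rfl⟩

theorem retraction_comp (S T : Set V) :
    (retraction G S).comp (retraction G T) = retraction G (S ∩ T) := by
  refine raag_hom_ext G fun u => ?_
  by_cases hT : u ∈ T <;> by_cases hS : u ∈ S <;> simp [hS, hT]

theorem gen_mem_Asub_iff {S : Set V} {u : V} : gen G u ∈ Asub G S ↔ u ∈ S := by
  refine ⟨fun hu => ?_, fun hu => Subgroup.subset_closure ⟨u, hu, rfl⟩⟩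
  by_contra huS
  have := retraction_apply_of_mem G hu
  rw [retraction_gen, if_neg huS] at this
  exact gen_ne_one G u this.symm

theorem Asub_inter (S T : Set V) : Asub G (S ∩ T) = Asub G S ⊓ Asub G T := by
  refine le_antisymm (le_inf (Asub_mono G Set.inter_subset_left)
    (Asub_mono G Set.inter_subset_right)) fun x ⟨hS, hT⟩ => ?_
  rw [← retraction_apply_of_mem G hS, ← retraction_apply_of_mem G hT, ← MonoidHom.comp_apply,
    retraction_comp]
  exact retraction_mem G _ _

end Retraction

theorem Asub_biInter {ι : Type*} (s : Finset ι) (S : ι → Set V) :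
    Asub G (⋂ i ∈ s, S i) = ⨅ i ∈ s, Asub G (S i) := by
  classical
  induction s using Finset.induction_on with
  | empty => simp [Asub_univ]
  | insert a s _ ih => rw [Finset.set_biInter_insert, Finset.iInf_insert, Asub_inter, ih]

def genAsub {S : Set V} {u : V} (hu : u ∈ S) : Asub G S :=
  ⟨gen G u, Subgroup.subset_closure ⟨u, hu, rfl⟩⟩

section Amalgam

open Monoid

variable (v : V)

/-- The factors of the splitting `A_Γ = A_{st v} *_{A_{lk v}} A_{V ∖ {v}}`. -/
def amalgamFactor (b : Bool) : Set V := cond b (st G v) {v}ᶜ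

theorem lk_subset_amalgamFactor (b : Bool) : lk G v ⊆ amalgamFactor G v b := by
  cases b
  · exact fun u (hu : G.Adj v u) (huv : u = v) => G.irrefl (huv ▸ hu)
  · exact lk_subset_st G v

theorem exists_mem_amalgamFactor (u : V) : ∃ b, u ∈ amalgamFactor G v b :=
  (eq_or_ne u v).elim (fun h => ⟨true, Or.inl h⟩) fun h => ⟨false, h⟩

noncomputable def amalgamMap (b : Bool) : Asub G (lk G v) →* Asub G (amalgamFactor G v b) :=
  Subgroup.inclusion (Asub_mono G (lk_subset_amalgamFactor G v b))

theorem amalgamMap_range_ne_top {u₀ : V} (hu₀ : u₀ ≠ v) (hadj : ¬G.Adj v u₀) (b : Bool) :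
    (amalgamMap G v b).range ≠ ⊤ := by
  obtain ⟨u, hu, hulk⟩ : ∃ u ∈ amalgamFactor G v b, u ∉ lk G v := by
    cases b
    exacts [⟨u₀, hu₀, hadj⟩, ⟨v, Set.mem_insert v _, G.irrefl⟩]
  intro htop
  have hmem := htop ▸ Subgroup.mem_top (genAsub G hu)
  rw [amalgamMap, Subgroup.inclusion_range, Subgroup.mem_subgroupOf, genAsub,
    gen_mem_Asub_iff] at hmem
  exact hulk hmem

theorem of_genAsub_eq_of_genAsub {b c : Bool} {u : V} (hb : u ∈ amalgamFactor G v b)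
    (hc : u ∈ amalgamFactor G v c) :
    PushoutI.of (φ := amalgamMap G v) b (genAsub G hb) = PushoutI.of c (genAsub G hc) := by
  obtain rfl | hbc := eq_or_ne b c
  · rfl
  have hlk : u ∈ lk G v := by
    cases b <;> cases c <;> simp_all [amalgamFactor, mem_st_iff, lk]
  exact (PushoutI.of_apply_eq_base _ b (genAsub G hlk)).trans
    (PushoutI.of_apply_eq_base _ c (genAsub G hlk)).symm

noncomputable def amalgamGen (u : V) : PushoutI (amalgamMap G v) :=
  PushoutI.of _ (genAsub G (exists_mem_amalgamFactor G v u).choose_spec)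

theorem amalgamGen_eq {b : Bool} {u : V} (hu : u ∈ amalgamFactor G v b) :
    amalgamGen G v u = PushoutI.of b (genAsub G hu) :=
  of_genAsub_eq_of_genAsub G v _ hu

noncomputable def amalgamOfRaag : Raag G →* PushoutI (amalgamMap G v) :=
  raagLift G (amalgamGen G v) fun u w h => by
    obtain ⟨b, hub, hwb⟩ : ∃ b, u ∈ amalgamFactor G v b ∧ w ∈ amalgamFactor G v b := by
      by_cases huv : u = v
      · exact ⟨true, Or.inl huv, Or.inr (huv ▸ h)⟩
      by_cases hwv : w = v
      · exact ⟨true, Or.inr (hwv ▸ h.symm), Or.inl hwv⟩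
      exact ⟨false, huv, hwv⟩
    rw [amalgamGen_eq G v hub, amalgamGen_eq G v hwb]
    exact Commute.map (Subtype.ext (gen_commute G h).eq) _

noncomputable def amalgamToRaag : PushoutI (amalgamMap G v) →* Raag G :=
  PushoutI.lift (fun b => (Asub G (amalgamFactor G v b)).subtype) (Asub G (lk G v)).subtype
    fun _ => MonoidHom.ext fun _ => rfl

noncomputable def amalgamEquiv : Raag G ≃* PushoutI (amalgamMap G v) :=
  MonoidHom.toMulEquiv (amalgamOfRaag G v) (amalgamToRaag G v)
    (raag_hom_ext G fun u => by
      obtain ⟨b, hu⟩ := exists_mem_amalgamFactor G v u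
      simp [amalgamOfRaag, amalgamGen_eq G v hu, amalgamToRaag, genAsub])
    (PushoutI.hom_ext_nonempty fun b => MonoidHom.ext fun ⟨x, hx⟩ => by
      simp only [MonoidHom.comp_apply, amalgamToRaag, PushoutI.lift_of, Subgroup.coe_subtype,
        MonoidHom.id_apply]
      induction hx using Subgroup.closure_induction with
      | mem _ hy =>
        obtain ⟨u, hu, rfl⟩ := hy
        exact (raagLift_gen _ _ _ _).trans (amalgamGen_eq G v hu)
      | one => exact (map_one _).trans (map_one _).symm
      | mul _ _ _ _ ha hb =>
        rw [map_mul, ha, hb, ← map_mul]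
        rfl
      | inv _ _ ha =>
        rw [map_inv, ha, ← map_inv]
        rfl)

theorem center_le_Asub_lk {u₀ : V} (hu₀ : u₀ ≠ v) (hadj : ¬G.Adj v u₀) :
    Subgroup.center (Raag G) ≤ Asub G (lk G v) := by
  intro x hx
  obtain ⟨c, hc⟩ := PushoutI.center_le_range_base (fun b => Subgroup.inclusion_injective _)
    (amalgamMap_range_ne_top G v hu₀ hadj) (MulEquivClass.apply_mem_center (amalgamEquiv G v) hx)
  have hx : x = c := by
    rw [← (amalgamEquiv G v).symm_apply_apply x, ← hc]
    change amalgamToRaag G v (PushoutI.base (amalgamMap G v) c) = c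
    exact PushoutI.lift_base _ _ _ c
  exact hx ▸ c.2

end Amalgam

theorem center_eq_bot_of_forall_exists_not_adj [Fintype V]
    (h : ∀ v, ∃ w, w ≠ v ∧ ¬G.Adj v w) :
    Subgroup.center (Raag G) = ⊥ := by
  have hle : Subgroup.center (Raag G) ≤ ⨅ v ∈ Finset.univ, Asub G (lk G v) :=
    le_iInf₂ fun v _ => let ⟨_, hw, hadj⟩ := h v; center_le_Asub_lk G v hw hadj
  have hempty : (⋂ v ∈ Finset.univ, lk G v) = ∅ :=
    Set.eq_empty_of_forall_notMem fun u hu =>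
      G.irrefl (Set.mem_iInter₂.mp hu u (Finset.mem_univ u))
  rwa [← Asub_biInter, hempty, Asub_empty, le_bot_iff] at hle

theorem unique_maximal_class_iff_center_nontrivial_general {V : Type*} [Fintype V]
    (G : SimpleGraph V) (hconn : G.Connected) :
    ((∀ v w : V, IsMaximalClass G v → IsMaximalClass G w → vequiv G v w) ↔
      (∃ v : V, ∀ w : V, w ≠ v → G.Adj v w)) ∧
    ((∃ v : V, ∀ w : V, w ≠ v → G.Adj v w) ↔ Subgroup.center (Raag G) ≠ ⊥) := by
  refine ⟨⟨exists_forall_adj_of_vequiv G hconn,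
    fun ⟨v, hv⟩ _ _ => vequiv_of_isMaximalClass G hv⟩, ⟨fun ⟨v, hv⟩ hbot => ?_, fun hne => ?_⟩⟩
  · exact gen_ne_one G v (Subgroup.mem_bot.1 (hbot ▸ gen_mem_center G hv))
  · by_contra hdom
    push Not at hdom
    exact hne (center_eq_bot_of_forall_exists_not_adj G hdom)

/-- the following are equivalent: (i) there is exactly one maximal equivalence
class; (ii) some vertex is adjacent to every other vertex; (iii) the center of `A_Γ` is
nontrivial. -/
theorem unique_maximal_class_iff_center_nontrivial {V : Type*} [Fintype V] [Nonempty V]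
    (G : SimpleGraph V) (hconn : G.Connected) :
    ((∀ v w : V, IsMaximalClass G v → IsMaximalClass G w → vequiv G v w) ↔
      (∃ v : V, ∀ w : V, w ≠ v → G.Adj v w)) ∧
    ((∃ v : V, ∀ w : V, w ≠ v → G.Adj v w) ↔ Subgroup.center (Raag G) ≠ ⊥) :=
  unique_maximal_class_iff_center_nontrivial_general G hconn

end RaagPaper
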